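/- arXiv:2411.07120 — 3 statements merged into one kernel-verified Lean document; each statement's English description precedes it below -/
import Mathlib

section
/- Let β ∈ [0,1), let g_1,…,g_T be vectors in ℝ^k, and define the exponential-moving-average momentum sequence m_0 = 0 and m_t = β·m_{t−1} + (1−β)·g_t for t = 1,…,T. Then Σ_{t=1}^T ‖m_t‖² ≤ Σ_{t=1}^T ‖g_t‖². -/
/-! Squared norm is convex, so `‖m_t‖² ≤ β ‖m_{t-1}‖² + (1 - β) ‖g_t‖²`. Summing over `t` and using
`m₀ = 0`, the shifted sum `Σ ‖m_{t-1}‖²` is at most `Σ ‖m_t‖²`, whence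
`(1 - β) Σ ‖m_t‖² ≤ (1 - β) Σ ‖g_t‖²`. -/

open Finset

theorem norm_smul_add_one_sub_smul_sq_le {E : Type*} [SeminormedAddCommGroup E] [NormedSpace ℝ E]
    {β : ℝ} (hβ0 : 0 ≤ β) (hβ1 : β ≤ 1) (x y : E) :
    ‖β • x + (1 - β) • y‖ ^ 2 ≤ β * ‖x‖ ^ 2 + (1 - β) * ‖y‖ ^ 2 :=
  (convexOn_univ_norm.pow (fun _ _ => norm_nonneg _) 2).2 trivial trivial hβ0 (sub_nonneg.2 hβ1)
    (add_sub_cancel β 1)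

theorem Finset.sum_Icc_one_sub_one_add_eq {M : Type*} [AddCommMonoid M] (f : ℕ → M) (T : ℕ) :
    ∑ t ∈ Icc 1 T, f (t - 1) + f T = f 0 + ∑ t ∈ Icc 1 T, f t := by
  induction T with
  | zero => simp [add_comm]
  | succ T ih =>
    rw [sum_Icc_succ_top (by omega), sum_Icc_succ_top (by omega), Nat.add_sub_cancel, ← add_assoc,
      ih, add_assoc]

theorem Finset.sum_Icc_one_sub_one_le {M : Type*} [AddCommMonoid M] [PartialOrder M]
    [IsOrderedAddMonoid M] {f : ℕ → M} (h0 : f 0 = 0) {T : ℕ} (hT : 0 ≤ f T) :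
    ∑ t ∈ Icc 1 T, f (t - 1) ≤ ∑ t ∈ Icc 1 T, f t := by
  calc ∑ t ∈ Icc 1 T, f (t - 1) ≤ ∑ t ∈ Icc 1 T, f (t - 1) + f T := le_add_of_nonneg_right hT
    _ = ∑ t ∈ Icc 1 T, f t := by rw [sum_Icc_one_sub_one_add_eq, h0, zero_add]

/-- For `β ∈ [0,1)` and the EMA momentum sequence `m₀ = 0`,
`m_t = β·m_{t−1} + (1−β)·g_t`, we have `Σ_{t=1}^T ‖m_t‖² ≤ Σ_{t=1}^T ‖g_t‖²`. -/
theorem sum_sq_norm_momentum_le {k : ℕ} (β : ℝ) (hβ0 : 0 ≤ β) (hβ1 : β < 1)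
    (T : ℕ) (g m : ℕ → EuclideanSpace ℝ (Fin k))
    (hm0 : m 0 = 0)
    (hm : ∀ t, 1 ≤ t → t ≤ T → m t = β • m (t - 1) + (1 - β) • g t) :
    ∑ t ∈ Finset.Icc 1 T, ‖m t‖ ^ 2 ≤ ∑ t ∈ Finset.Icc 1 T, ‖g t‖ ^ 2 := by
  have hstep : ∀ t ∈ Icc 1 T, ‖m t‖ ^ 2 ≤ β * ‖m (t - 1)‖ ^ 2 + (1 - β) * ‖g t‖ ^ 2 := by
    intro t ht
    obtain ⟨ht1, htT⟩ := mem_Icc.1 ht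
    rw [hm t ht1 htT]
    exact norm_smul_add_one_sub_smul_sq_le hβ0 hβ1.le _ _
  have hsum := sum_le_sum hstep
  rw [sum_add_distrib, ← mul_sum, ← mul_sum] at hsum
  have hshift : ∑ t ∈ Icc 1 T, ‖m (t - 1)‖ ^ 2 ≤ ∑ t ∈ Icc 1 T, ‖m t‖ ^ 2 :=
    sum_Icc_one_sub_one_le (f := fun t => ‖m t‖ ^ 2) (by simp [hm0]) (by positivity)
  have hscaled : (1 - β) * ∑ t ∈ Icc 1 T, ‖m t‖ ^ 2 ≤ (1 - β) * ∑ t ∈ Icc 1 T, ‖g t‖ ^ 2 := by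
    nlinarith [mul_le_mul_of_nonneg_left hshift hβ0]
  exact le_of_mul_le_mul_left hscaled (sub_pos.2 hβ1)
end

section
/- Let b_0 > 0 and let a_1,…,a_T be nonnegative reals. Define b_t := √(b_{t−1}² + a_t) for t = 1,…,T. Then Σ_{t=1}^T a_t/b_t² ≤ 2·log(b_T/b_0). -/
/-!
With `c t = b t ^ 2` the recursion reads `a t = c t - c (t - 1)`, so `c` is nondecreasing and
positive, and each summand is `(c t - c (t - 1)) / c t = 1 - c (t - 1) / c t ≤ log (c t / c (t - 1))`
by `1 - x⁻¹ ≤ log x`. The right-hand sides telescope to `log (c T / c 0) = 2 log (b T / b 0)`.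
-/

open Finset Real

lemma sub_div_le_log_sub_log {x y : ℝ} (hx : 0 < x) (hy : 0 < y) :
    (y - x) / y ≤ log y - log x := by
  have h := one_sub_inv_le_log_of_pos (div_pos hy hx)
  rwa [inv_div, log_div hy.ne' hx.ne', ← div_self hy.ne', ← sub_div] at h

lemma sum_Icc_le_sub_of_le_sub {n : ℕ} {u f : ℕ → ℝ}
    (h : ∀ t, 1 ≤ t → t ≤ n → u t ≤ f t - f (t - 1)) :
    ∑ t ∈ Icc 1 n, u t ≤ f n - f 0 := by
  induction n with
  | zero => simp
  | succ n ih =>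
    rw [sum_Icc_succ_top (Nat.le_add_left 1 n)]
    have hstep := h (n + 1) (Nat.le_add_left 1 n) le_rfl
    have hprev := ih fun t h1 h2 ↦ h t h1 (h2.trans n.le_succ)
    rw [Nat.add_sub_cancel] at hstep
    linarith

lemma pos_of_pos_zero_of_steps_le {n : ℕ} {c : ℕ → ℝ} (h0 : 0 < c 0)
    (hmono : ∀ t, 1 ≤ t → t ≤ n → c (t - 1) ≤ c t) {t : ℕ} (ht : t ≤ n) : 0 < c t := by
  induction t with
  | zero => exact h0
  | succ t ih => exact (ih (t.le_succ.trans ht)).trans_le (hmono (t + 1) t.succ_pos ht)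

lemma sum_sub_div_le_log_sub_log {n : ℕ} {c : ℕ → ℝ} (h0 : 0 < c 0)
    (hmono : ∀ t, 1 ≤ t → t ≤ n → c (t - 1) ≤ c t) :
    ∑ t ∈ Icc 1 n, (c t - c (t - 1)) / c t ≤ log (c n) - log (c 0) :=
  sum_Icc_le_sub_of_le_sub (f := fun t ↦ log (c t)) fun t _ h2 ↦
    sub_div_le_log_sub_log (pos_of_pos_zero_of_steps_le h0 hmono ((t.sub_le 1).trans h2))
      (pos_of_pos_zero_of_steps_le h0 hmono h2)

/-- For `b₀ > 0`, nonnegative reals `a_1,…,a_T`, and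
`b_t = √(b_{t−1}² + a_t)`, we have `Σ_{t=1}^T a_t/b_t² ≤ 2·log(b_T/b₀)`. -/
theorem sum_div_sq_le_two_log (T : ℕ) (a b : ℕ → ℝ)
    (hb0 : 0 < b 0) (ha : ∀ t, 1 ≤ t → t ≤ T → 0 ≤ a t)
    (hrec : ∀ t, 1 ≤ t → t ≤ T → b t = Real.sqrt ((b (t - 1)) ^ 2 + a t)) :
    ∑ t ∈ Finset.Icc 1 T, a t / (b t) ^ 2 ≤ 2 * Real.log (b T / b 0) := by
  have hsq : ∀ t, 1 ≤ t → t ≤ T → b t ^ 2 = b (t - 1) ^ 2 + a t := fun t h1 h2 ↦ by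
    rw [hrec t h1 h2, sq_sqrt (add_nonneg (sq_nonneg _) (ha t h1 h2))]
  have hmono : ∀ t, 1 ≤ t → t ≤ T → b (t - 1) ^ 2 ≤ b t ^ 2 := fun t h1 h2 ↦ by
    linarith [hsq t h1 h2, ha t h1 h2]
  have hbT : b T ≠ 0 := (pow_ne_zero_iff two_ne_zero).mp
    (pos_of_pos_zero_of_steps_le (c := fun t ↦ b t ^ 2) (pow_pos hb0 2) hmono le_rfl).ne'
  calc ∑ t ∈ Icc 1 T, a t / b t ^ 2
      = ∑ t ∈ Icc 1 T, (b t ^ 2 - b (t - 1) ^ 2) / b t ^ 2 := sum_congr rfl fun t ht ↦ by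
        rw [mem_Icc] at ht
        rw [hsq t ht.1 ht.2, add_sub_cancel_left]
    _ ≤ log (b T ^ 2) - log (b 0 ^ 2) :=
        sum_sub_div_le_log_sub_log (c := fun t ↦ b t ^ 2) (pow_pos hb0 2) hmono
    _ = 2 * log (b T / b 0) := by
        rw [log_pow, log_pow, log_div hbT hb0.ne']
        push_cast
        ring
end

section
/- Let f : ℝ^d → ℝ be L-smooth and lower bounded by f_*, and run SGD with the Subset-Norm step size with step size η > 0. Write ξ_{t,Ψ_i} := ĝ_{t,Ψ_i} − ∇f(x_t)_{Ψ_i}, Δ₁ := f(x₁) − f_*, and b_{0,min} := min_i b_{0,i}. Then deterministically, Σ_{t=1}^T Σ_{i=0}^{c−1} ‖ĝ_{t,Ψ_i}‖²/b_{t,i} ≤ 4Δ₁/η + 2·Σ_{t=1}^T Σ_{i=0}^{c−1} ‖ξ_{t,Ψ_i}‖²/b_{t,i} + 8ηLc·max(0, log(4ηL/b_{0,min})). -/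
set_option autoImplicit false

/-!
Apply the descent lemma `f x' ≤ f x + ⟪∇f x, x' - x⟫ + L/2 ‖x' - x‖²` to every step. Since
`2 ⟪a, g⟫ ≥ ‖g‖² - ‖g - a‖²` on each block, the first-order term is at most
`-η/2 Σᵢ ‖ĝ_{Ψᵢ}‖²/bᵢ + η/2 Σᵢ ‖ξ_{Ψᵢ}‖²/bᵢ`, and the function values telescope to at most `Δ₁`.
For the second-order term `Lη²/2 ‖ĝ_{t,Ψᵢ}‖²/b_{t,i}²` fix a threshold `a ≥ 2ηL` (here `a = 4ηL`):
once `b_{t,i} ≥ a` it is absorbed into `η/4 ‖ĝ_{t,Ψᵢ}‖²/b_{t,i}`; before that,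
`‖ĝ_{t,Ψᵢ}‖² = b_{t,i}² - b_{t-1,i}²` and `1 - 1/r ≤ log r` bound it by `Lη² log (b_{t,i}/b_{t-1,i})`.
These are increments of `log (min b_{t,i} a)`, so they telescope to at most `max 0 (log (a/b_{0,i}))`.
-/

open Finset Real

open RealInnerProductSpace in
theorem le_add_inner_add_half_mul_norm_sq_of_lipschitz_gradient {E : Type*}
    [NormedAddCommGroup E] [InnerProductSpace ℝ E] [CompleteSpace E] {f : E → ℝ} {g : E → E}
    {L : ℝ} (hg : ∀ y, HasGradientAt f (g y) y) (hL : ∀ y z, ‖g y - g z‖ ≤ L * ‖y - z‖)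
    (x y : E) :
    f y ≤ f x + ⟪g x, y - x⟫ + L / 2 * ‖y - x‖ ^ 2 := by
  set v := y - x
  have hf : ∀ s : ℝ, HasDerivAt (fun s : ℝ => f (x + s • v)) ⟪g (x + s • v), v⟫ s := fun s => by
    have := (hg (x + s • v)).hasFDerivAt.comp_hasDerivAt s
      (((hasDerivAt_id s).smul_const v).const_add x)
    simp only [InnerProductSpace.toDual_apply_apply, one_smul] at this
    exact this
  let q : ℝ → ℝ := fun s => f x + s * ⟪g x, v⟫ + L / 2 * s ^ 2 * ‖v‖ ^ 2 - f (x + s • v)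
  have hq : ∀ s, HasDerivAt q (⟪g x, v⟫ + L * s * ‖v‖ ^ 2 - ⟪g (x + s • v), v⟫) s := fun s => by
    refine ((((hasDerivAt_id s).mul_const _).const_add _).add
      (((hasDerivAt_pow 2 s).const_mul (L / 2)).mul_const _)).sub (hf s) |>.congr_deriv ?_
    simp only [one_mul, Nat.cast_ofNat]; ring
  have hq' : ∀ s ∈ interior (Set.Ici (0 : ℝ)),
      0 ≤ ⟪g x, v⟫ + L * s * ‖v‖ ^ 2 - ⟪g (x + s • v), v⟫ := by
    intro s hs
    rw [interior_Ici, Set.mem_Ioi] at hs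
    have : ⟪g (x + s • v) - g x, v⟫ ≤ L * s * ‖v‖ ^ 2 :=
      calc ⟪g (x + s • v) - g x, v⟫ ≤ ‖g (x + s • v) - g x‖ * ‖v‖ := real_inner_le_norm _ _
      _ ≤ L * ‖s • v‖ * ‖v‖ := by gcongr; simpa using hL (x + s • v) x
      _ = L * s * ‖v‖ ^ 2 := by rw [norm_smul, Real.norm_of_nonneg hs.le]; ring
    rw [inner_sub_left] at this
    linarith
  have hmono : q 0 ≤ q 1 :=
    monotoneOn_of_hasDerivWithinAt_nonneg (convex_Ici 0)
      (fun s _ => (hq s).continuousAt.continuousWithinAt) (fun s _ => (hq s).hasDerivWithinAt) hq'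
      Set.self_mem_Ici (Set.mem_Ici.2 zero_le_one) zero_le_one
  have hq0 : q 0 = 0 := by simp [q]
  have hq1 : q 1 = f x + ⟪g x, y - x⟫ + L / 2 * ‖y - x‖ ^ 2 - f y := by simp [q, v]
  linarith

theorem nonneg_of_forall_norm_sub_le_mul_norm_sub {E F : Type*} [NormedAddCommGroup E]
    [Nontrivial E] [SeminormedAddCommGroup F] {g : E → F} {L : ℝ}
    (hL : ∀ y z, ‖g y - g z‖ ≤ L * ‖y - z‖) : 0 ≤ L := by
  obtain ⟨y, hy⟩ := exists_ne (0 : E)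
  have := (norm_nonneg _).trans (hL y 0)
  rw [sub_zero] at this
  exact nonneg_of_mul_nonneg_left this (norm_pos_iff.2 hy)

section Blocks

variable {ι κ : Type*} [Fintype ι] [DecidableEq κ] (ψ : ι → κ)

def blockNormSq (v : EuclideanSpace ℝ ι) (i : κ) : ℝ :=
  ∑ j ∈ univ.filter (fun j => ψ j = i), v j ^ 2

theorem sum_blockNormSq_div [Fintype κ] (v : EuclideanSpace ℝ ι) (w : κ → ℝ) :
    ∑ i, blockNormSq ψ v i / w i = ∑ j, v j ^ 2 / w (ψ j) := by
  rw [← sum_fiberwise univ ψ fun j => v j ^ 2 / w (ψ j)]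
  refine sum_congr rfl fun i _ => ?_
  rw [blockNormSq, sum_div]
  exact sum_congr rfl fun j hj => by rw [(mem_filter.1 hj).2]

open RealInnerProductSpace in
theorem descent_subsetNorm_step [Fintype κ] {f : EuclideanSpace ℝ ι → ℝ}
    {gradf : EuclideanSpace ℝ ι → EuclideanSpace ℝ ι} {L η : ℝ}
    (hgrad : ∀ y, HasGradientAt f (gradf y) y)
    (hsmooth : ∀ y z, ‖gradf y - gradf z‖ ≤ L * ‖y - z‖) (hη : 0 ≤ η) {b : κ → ℝ}
    (hb : ∀ i, 0 ≤ b i) {x x' g : EuclideanSpace ℝ ι} (hx' : ∀ j, x' j = x j - η / b (ψ j) * g j) :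
    η / 2 * ∑ i, blockNormSq ψ g i / b i ≤
      f x - f x' + η / 2 * ∑ i, blockNormSq ψ (g - gradf x) i / b i +
        ∑ i, L * η ^ 2 / 2 * (blockNormSq ψ g i / b i ^ 2) := by
  have hdescent := le_add_inner_add_half_mul_norm_sq_of_lipschitz_gradient hgrad hsmooth x x'
  have hinner : ⟪gradf x, x' - x⟫ = -∑ j, η / b (ψ j) * g j * gradf x j := by
    simp [PiLp.inner_apply, hx', ← sum_neg_distrib]
  have hnorm : L / 2 * ‖x' - x‖ ^ 2 = ∑ i, L * η ^ 2 / 2 * (blockNormSq ψ g i / b i ^ 2) := by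
    rw [← mul_sum, sum_blockNormSq_div ψ g fun i => b i ^ 2, EuclideanSpace.real_norm_sq_eq,
      mul_sum, mul_sum]
    refine sum_congr rfl fun j _ => ?_
    simp only [PiLp.sub_apply, hx']
    ring
  have hcross : ∑ j, η / 2 * (g j ^ 2 / b (ψ j)) ≤
      ∑ j, (η / b (ψ j) * g j * gradf x j + η / 2 * ((g - gradf x) j ^ 2 / b (ψ j))) := by
    refine sum_le_sum fun j _ => ?_
    have : 0 ≤ η / 2 * (gradf x j ^ 2 / b (ψ j)) := by have := hb (ψ j); positivity
    simp only [PiLp.sub_apply]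
    linarith [show η / b (ψ j) * g j * gradf x j + η / 2 * ((g j - gradf x j) ^ 2 / b (ψ j)) -
      η / 2 * (g j ^ 2 / b (ψ j)) = η / 2 * (gradf x j ^ 2 / b (ψ j)) by ring]
  rw [sum_blockNormSq_div, sum_blockNormSq_div, mul_sum, mul_sum]
  rw [sum_add_distrib] at hcross
  linarith

end Blocks

theorem sum_Icc_one_sub_pred {M : Type*} [AddCommGroup M] (u : ℕ → M) (T : ℕ) :
    ∑ t ∈ Icc 1 T, (u t - u (t - 1)) = u T - u 0 := by
  induction T with
  | zero => simp
  | succ T ih => rw [sum_Icc_succ_top (by omega), ih, Nat.add_sub_cancel]; abel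

theorem sum_Icc_one_sub_succ {M : Type*} [AddCommGroup M] (u : ℕ → M) (T : ℕ) :
    ∑ t ∈ Icc 1 T, (u t - u (t + 1)) = u 1 - u (T + 1) := by
  induction T with
  | zero => simp
  | succ T ih => rw [sum_Icc_succ_top (by omega), ih]; abel

theorem div_sq_le_div_add_two_mul_log_min {a b b' : ℝ} (ha : 0 < a) (hb : 0 < b) (hbb' : b ≤ b') :
    (b' ^ 2 - b ^ 2) / b' ^ 2 ≤
      (b' ^ 2 - b ^ 2) / (a * b') + 2 * (log (min b' a) - log (min b a)) := by
  have hb' : 0 < b' := hb.trans_le hbb'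
  have hnum : 0 ≤ b' ^ 2 - b ^ 2 := by nlinarith
  rcases le_or_gt a b' with hab | hab
  · have h1 : (b' ^ 2 - b ^ 2) / b' ^ 2 ≤ (b' ^ 2 - b ^ 2) / (a * b') :=
      div_le_div_of_nonneg_left hnum (by positivity) (by nlinarith)
    have h2 : log (min b a) ≤ log (min b' a) := log_le_log (lt_min hb ha) (min_le_min_right a hbb')
    linarith
  · rw [min_eq_left hab.le, min_eq_left (hbb'.trans hab.le)]
    have h1 : 0 ≤ (b' ^ 2 - b ^ 2) / (a * b') := by positivity
    have h2 := one_sub_inv_le_log_of_pos (pow_pos (div_pos hb' hb) 2)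
    rw [log_pow, log_div hb'.ne' hb.ne'] at h2
    have h3 : (b' ^ 2 - b ^ 2) / b' ^ 2 = 1 - ((b' / b) ^ 2)⁻¹ := by field_simp
    push_cast at h2
    linarith

section Accumulator

variable {b G : ℕ → ℝ}

theorem accumulator_sq_succ (hG : ∀ t, 0 ≤ G t) (hrec : ∀ t, b (t + 1) = √(b t ^ 2 + G (t + 1)))
    (t : ℕ) : b (t + 1) ^ 2 = b t ^ 2 + G (t + 1) := by
  rw [hrec, sq_sqrt (add_nonneg (sq_nonneg _) (hG _))]

theorem accumulator_pos (hG : ∀ t, 0 ≤ G t) (hb0 : 0 < b 0)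
    (hrec : ∀ t, b (t + 1) = √(b t ^ 2 + G (t + 1))) (t : ℕ) : 0 < b t := by
  induction t with
  | zero => exact hb0
  | succ t ih => rw [hrec]; exact sqrt_pos.2 (by nlinarith [hG (t + 1)])

theorem accumulator_monotone (hG : ∀ t, 0 ≤ G t)
    (hrec : ∀ t, b (t + 1) = √(b t ^ 2 + G (t + 1))) : Monotone b :=
  monotone_nat_of_le_succ fun t => by
    rw [hrec]
    exact (le_abs_self _).trans (sqrt_sq_eq_abs (b t) ▸ sqrt_le_sqrt (by linarith [hG (t + 1)]))

theorem sum_smoothness_term_le (hG : ∀ t, 0 ≤ G t) (hb0 : 0 < b 0)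
    (hrec : ∀ t, b (t + 1) = √(b t ^ 2 + G (t + 1))) {L η a β : ℝ} (hL : 0 ≤ L) (hη : 0 < η)
    (ha : 2 * η * L ≤ a) (hβ : 0 < β) (hβb : β ≤ b 0) (T : ℕ) :
    ∑ t ∈ Icc 1 T, L * η ^ 2 / 2 * (G t / b t ^ 2) ≤
      η / 4 * ∑ t ∈ Icc 1 T, G t / b t + L * η ^ 2 * max 0 (log (a / β)) := by
  have hb := accumulator_pos hG hb0 hrec
  rcases hL.eq_or_lt with rfl | hL
  · simp only [zero_mul, zero_div, sum_const_zero, add_zero]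
    exact mul_nonneg (by positivity) (sum_nonneg fun t _ => div_nonneg (hG t) (hb t).le)
  have ha0 : 0 < a := lt_of_lt_of_le (by positivity) ha
  set ℓ : ℕ → ℝ := fun t => log (min (b t) a)
  have hstep : ∀ t ∈ Icc 1 T,
      L * η ^ 2 / 2 * (G t / b t ^ 2) ≤ η / 4 * (G t / b t) + L * η ^ 2 * (ℓ t - ℓ (t - 1)) := by
    intro t ht
    obtain ⟨s, rfl⟩ : ∃ s, t = s + 1 := ⟨t - 1, by have := (mem_Icc.1 ht).1; omega⟩
    have hGs : G (s + 1) = b (s + 1) ^ 2 - b s ^ 2 := by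
      rw [accumulator_sq_succ hG hrec]; ring
    have hlog := div_sq_le_div_add_two_mul_log_min ha0 (hb s)
      (accumulator_monotone hG hrec s.le_succ)
    rw [← hGs] at hlog
    have hcoef : L * η ^ 2 / 2 * (G (s + 1) / (a * b (s + 1))) =
        η / 4 * (G (s + 1) / b (s + 1)) * (2 * η * L / a) := by
      field_simp
      ring
    have hsmall : η / 4 * (G (s + 1) / b (s + 1)) * (2 * η * L / a) ≤
        η / 4 * (G (s + 1) / b (s + 1)) :=
      mul_le_of_le_one_right (by have := hG (s + 1); have := hb (s + 1); positivity)
        (div_le_one_of_le₀ ha ha0.le)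
    calc L * η ^ 2 / 2 * (G (s + 1) / b (s + 1) ^ 2)
        ≤ L * η ^ 2 / 2 * (G (s + 1) / (a * b (s + 1)) + 2 * (ℓ (s + 1) - ℓ s)) := by gcongr
      _ = L * η ^ 2 / 2 * (G (s + 1) / (a * b (s + 1))) + L * η ^ 2 * (ℓ (s + 1) - ℓ s) := by ring
      _ ≤ η / 4 * (G (s + 1) / b (s + 1)) + L * η ^ 2 * (ℓ (s + 1) - ℓ (s + 1 - 1)) := by
        rw [hcoef, Nat.add_sub_cancel]; linarith
  have hclip : ℓ T - ℓ 0 ≤ max 0 (log (a / β)) := by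
    have hT : ℓ T ≤ log a := log_le_log (lt_min (hb T) ha0) (min_le_right _ _)
    rcases le_total (b 0) a with h0 | h0
    · have : log β ≤ ℓ 0 := by simp only [ℓ, min_eq_left h0]; exact log_le_log hβ hβb
      rw [log_div ha0.ne' hβ.ne']
      exact le_max_of_le_right (by linarith)
    · simp only [ℓ, min_eq_right h0] at hT ⊢
      exact le_max_of_le_left (by linarith)
  calc ∑ t ∈ Icc 1 T, L * η ^ 2 / 2 * (G t / b t ^ 2)
      ≤ ∑ t ∈ Icc 1 T, (η / 4 * (G t / b t) + L * η ^ 2 * (ℓ t - ℓ (t - 1))) := sum_le_sum hstep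
    _ = η / 4 * ∑ t ∈ Icc 1 T, G t / b t + L * η ^ 2 * (ℓ T - ℓ 0) := by
      rw [sum_add_distrib, ← mul_sum, ← mul_sum, sum_Icc_one_sub_pred]
    _ ≤ η / 4 * ∑ t ∈ Icc 1 T, G t / b t + L * η ^ 2 * max 0 (log (a / β)) := by gcongr

end Accumulator

theorem sum_sum_le_of_descent {κ : Type*} [Fintype κ] {η m K : ℝ} (hη : 0 < η) (u : ℕ → ℝ)
    (hu : ∀ t, m ≤ u t) (A B C : ℕ → κ → ℝ) (T : ℕ)
    (hstep : ∀ t ∈ Icc 1 T,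
      η / 2 * ∑ i, A t i ≤ u t - u (t + 1) + η / 2 * ∑ i, B t i + ∑ i, C t i)
    (hblock : ∀ i, ∑ t ∈ Icc 1 T, C t i ≤ η / 4 * ∑ t ∈ Icc 1 T, A t i + K) :
    ∑ t ∈ Icc 1 T, ∑ i, A t i ≤
      4 * (u 1 - m) / η + 2 * ∑ t ∈ Icc 1 T, ∑ i, B t i + 4 * Fintype.card κ * K / η := by
  set S := ∑ t ∈ Icc 1 T, ∑ i, A t i
  have hdescent : η / 2 * S ≤
      u 1 - u (T + 1) + η / 2 * ∑ t ∈ Icc 1 T, ∑ i, B t i + ∑ t ∈ Icc 1 T, ∑ i, C t i := by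
    have := sum_le_sum hstep
    rwa [sum_add_distrib, sum_add_distrib, sum_Icc_one_sub_succ, ← mul_sum, ← mul_sum] at this
  have hC : ∑ t ∈ Icc 1 T, ∑ i, C t i ≤ η / 4 * S + Fintype.card κ * K := by
    rw [sum_comm]
    refine (sum_le_sum fun i _ => hblock i).trans_eq ?_
    rw [sum_add_distrib, ← mul_sum, sum_comm, sum_const, card_univ, nsmul_eq_mul]
  have hm := hu (T + 1)
  rw [show 4 * (u 1 - m) / η + 2 * ∑ t ∈ Icc 1 T, ∑ i, B t i + 4 * Fintype.card κ * K / η =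
      (4 * (u 1 - m) + 2 * η * ∑ t ∈ Icc 1 T, ∑ i, B t i + 4 * Fintype.card κ * K) / η by
    field_simp, le_div_iff₀ hη]
  linarith

theorem subset_norm_grad_sum_bound_general {d c : ℕ}
    (ψ : Fin d → Fin c) (hψ : Function.Surjective ψ)
    (L fstar : ℝ) (f : EuclideanSpace ℝ (Fin d) → ℝ)
    (gradf : EuclideanSpace ℝ (Fin d) → EuclideanSpace ℝ (Fin d))
    (hgrad : ∀ y, HasGradientAt f (gradf y) y)
    (hsmooth : ∀ y z, ‖gradf y - gradf z‖ ≤ L * ‖y - z‖)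
    (hlb : ∀ y, fstar ≤ f y)
    (η : ℝ) (hη : 0 < η)
    (ghat : ℕ → EuclideanSpace ℝ (Fin d))
    (b : ℕ → Fin c → ℝ) (hb0 : ∀ i, 0 < b 0 i)
    (hbrec : ∀ t, 1 ≤ t → ∀ i, b t i =
      Real.sqrt ((b (t - 1) i) ^ 2 + ∑ j ∈ Finset.univ.filter (fun j => ψ j = i), (ghat t j) ^ 2))
    (x : ℕ → EuclideanSpace ℝ (Fin d))
    (hxrec : ∀ t, 1 ≤ t → ∀ j, x (t + 1) j = x t j - (η / b t (ψ j)) * ghat t j)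
    (Δ₁ b0min : ℝ) (hΔ₁ : Δ₁ = f (x 1) - fstar)
    (hb0min_le : ∀ i, b0min ≤ b 0 i) (hb0min_mem : ∃ i, b 0 i = b0min)
    (T : ℕ) :
    ∑ t ∈ Finset.Icc 1 T, ∑ i,
        (∑ j ∈ Finset.univ.filter (fun j => ψ j = i), (ghat t j) ^ 2) / b t i ≤
      4 * Δ₁ / η +
        2 * ∑ t ∈ Finset.Icc 1 T, ∑ i,
          (∑ j ∈ Finset.univ.filter (fun j => ψ j = i), (ghat t j - gradf (x t) j) ^ 2) / b t i +
        8 * η * L * c * max 0 (Real.log (4 * η * L / b0min)) := by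
  obtain ⟨i₀, rfl⟩ := hb0min_mem
  subst hΔ₁
  have hG : ∀ i t, 0 ≤ blockNormSq ψ (ghat t) i := fun i t => sum_nonneg fun j _ => sq_nonneg _
  have hrec : ∀ i t, b (t + 1) i = √(b t i ^ 2 + blockNormSq ψ (ghat (t + 1)) i) :=
    fun i t => hbrec (t + 1) t.succ_pos i
  have hb : ∀ t i, 0 < b t i := fun t i =>
    accumulator_pos (b := fun t => b t i) (hG i) (hb0 i) (hrec i) t
  have hL : ∀ i : Fin c, 0 ≤ L := fun i => by
    obtain ⟨j, -⟩ := hψ i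
    have : Nonempty (Fin d) := ⟨j⟩
    exact nonneg_of_forall_norm_sub_le_mul_norm_sub hsmooth
  set M := max 0 (log (4 * η * L / b 0 i₀))
  have hblock : ∀ i, ∑ t ∈ Icc 1 T, L * η ^ 2 / 2 * (blockNormSq ψ (ghat t) i / b t i ^ 2) ≤
      η / 4 * ∑ t ∈ Icc 1 T, blockNormSq ψ (ghat t) i / b t i + 2 * (L * η ^ 2 * M) := fun i =>
    (sum_smoothness_term_le (a := 4 * η * L) (hG i) (hb0 i) (hrec i) (hL i) hη
      (by nlinarith [hL i]) (hb0 i₀) (hb0min_le i) T).trans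
      (add_le_add le_rfl (le_mul_of_one_le_left
        (mul_nonneg (mul_nonneg (hL i) (sq_nonneg η)) (le_max_left _ _)) one_le_two))
  change ∑ t ∈ Icc 1 T, ∑ i, blockNormSq ψ (ghat t) i / b t i ≤ 4 * (f (x 1) - fstar) / η +
    2 * ∑ t ∈ Icc 1 T, ∑ i, blockNormSq ψ (ghat t - gradf (x t)) i / b t i + 8 * η * L * c * M
  refine (sum_sum_le_of_descent hη (fun t => f (x t)) (fun t => hlb (x t)) _ _ _ T
    (fun t ht => descent_subsetNorm_step ψ hgrad hsmooth hη.le (fun i => (hb t i).le)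
      (hxrec t (mem_Icc.1 ht).1)) hblock).trans_eq ?_
  rw [Fintype.card_fin]
  field_simp
  ring

/-- Deterministic bound for SGD with Subset-Norm step size: if `f` is
`L`-smooth and lower bounded by `f_*`, then
`Σ_{t=1}^T Σ_i ‖ĝ_{t,Ψ_i}‖²/b_{t,i} ≤ 4Δ₁/η + 2·Σ_{t=1}^T Σ_i ‖ξ_{t,Ψ_i}‖²/b_{t,i}
  + 8ηLc·max(0, log(4ηL/b_{0,min}))`. -/
theorem subset_norm_grad_sum_bound {d c : ℕ}
    (ψ : Fin d → Fin c) (hψ : Function.Surjective ψ)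
    (L fstar : ℝ) (f : EuclideanSpace ℝ (Fin d) → ℝ)
    (gradf : EuclideanSpace ℝ (Fin d) → EuclideanSpace ℝ (Fin d))
    (hgrad : ∀ y, HasGradientAt f (gradf y) y)
    (hsmooth : ∀ y z, ‖gradf y - gradf z‖ ≤ L * ‖y - z‖)
    (hlb : ∀ y, fstar ≤ f y)
    (η : ℝ) (hη : 0 < η)
    (ghat : ℕ → EuclideanSpace ℝ (Fin d))
    (b : ℕ → Fin c → ℝ) (hb0 : ∀ i, 0 < b 0 i)
    (hbrec : ∀ t, 1 ≤ t → ∀ i, b t i =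
      Real.sqrt ((b (t - 1) i) ^ 2 + ∑ j ∈ Finset.univ.filter (fun j => ψ j = i), (ghat t j) ^ 2))
    (x : ℕ → EuclideanSpace ℝ (Fin d))
    (hxrec : ∀ t, 1 ≤ t → ∀ j, x (t + 1) j = x t j - (η / b t (ψ j)) * ghat t j)
    (Δ₁ b0min : ℝ) (hΔ₁ : Δ₁ = f (x 1) - fstar)
    (hb0min_le : ∀ i, b0min ≤ b 0 i) (hb0min_mem : ∃ i, b 0 i = b0min)
    (T : ℕ) (hT : 1 ≤ T) :
    ∑ t ∈ Finset.Icc 1 T, ∑ i,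
        (∑ j ∈ Finset.univ.filter (fun j => ψ j = i), (ghat t j) ^ 2) / b t i ≤
      4 * Δ₁ / η +
        2 * ∑ t ∈ Finset.Icc 1 T, ∑ i,
          (∑ j ∈ Finset.univ.filter (fun j => ψ j = i), (ghat t j - gradf (x t) j) ^ 2) / b t i +
        8 * η * L * c * max 0 (Real.log (4 * η * L / b0min)) :=
  subset_norm_grad_sum_bound_general ψ hψ L fstar f gradf hgrad hsmooth hlb η hη ghat b hb0 hbrec x
    hxrec Δ₁ b0min hΔ₁ hb0min_le hb0min_mem T
end
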